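/- arXiv:0704.2813 — 2 statements merged into one kernel-verified Lean document; each statement's English description precedes it below -/
import Mathlib

section
/- For rank r = 3 with all weights equal to 1, the generating function M(x) ∈ ℚ⟦x⟧ of the non-colored Motzkin numbers of rank 3 satisfies 0 = 1 − (1+x)M + 2xM² + x²(1−2x)M⁴ + 2x⁵M⁶ − x⁶(1+x)M⁷ + x⁸M⁸. -/
open PowerSeries Finset

/-- The weight (number of color choices) of a single step of vertical displacement `z`:
up-steps `(1,j)` have weight `u j`, the level-step `(1,0)` has weight `l`, and
down-steps `(1,-j)` have weight `d j`. -/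
def stepWeight (u : ℕ → ℕ) (l : ℕ) (d : ℕ → ℕ) (z : ℤ) : ℕ :=
  if 0 < z then u z.toNat else if z < 0 then d (-z).toNat else l

/-- `motzkinCount r u l d s t n` is the weighted number `|𝒜_{s,t}(n)|` of lattice paths of
length `n` using admissible steps `(1,z)` with `z ∈ {-r, …, r}` (step `i` is encoded by
`f i : Fin (2*r+1)` via `z = (f i : ℤ) - r`), starting at height `s`, ending at height `t`,
and never going below the x-axis; each path is counted with weight the product of the
weights of its steps (i.e. the number of its colorings). -/
def motzkinCount (r : ℕ) (u : ℕ → ℕ) (l : ℕ) (d : ℕ → ℕ) (s t : ℕ) (n : ℕ) : ℕ :=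
  ∑ f : Fin n → Fin (2 * r + 1),
    if (∀ k : Fin (n + 1),
          0 ≤ (s : ℤ) + ∑ i : Fin n, if (i : ℕ) < (k : ℕ) then ((f i : ℤ) - r) else 0) ∧
        (s : ℤ) + (∑ i : Fin n, ((f i : ℤ) - r)) = t
    then ∏ i : Fin n, stepWeight u l d ((f i : ℤ) - r)
    else 0

/-- The generating function `A_{s,t}(x) = Σ_{n≥0} |𝒜_{s,t}(n)| xⁿ ∈ ℚ⟦x⟧`. -/
noncomputable def motzkinGF (r : ℕ) (u : ℕ → ℕ) (l : ℕ) (d : ℕ → ℕ) (s t : ℕ) :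
    PowerSeries ℚ :=
  PowerSeries.mk fun n => (motzkinCount r u l d s t n : ℚ)

/-!
A path from height `h ≥ 1` to `0` splits at its first step below level `h`; with the reversal
symmetry `A_{0,i} = A_{i,0}` this expresses `A_{1,0}, A_{2,0}, A_{3,0}` through each other and
`M = A_{0,0}`, while the first step of a path from `0` gives `M = 1 + x (A_{0,0} + ⋯ + A_{3,0})`.
Since `M` is a unit, put `y = x M` and `b = A_{1,0} / M`: the system collapses to the kernel
relation `y (1 + b + b²) + y² (1 + b) = b` and `M = 1 + y (1 + b + b² + b³) + y² (2 + 3b + 2b²)`.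
Eliminating `b` leaves `y² M² - (1 - 2y + 2y³ - 2y⁵ + y⁶) M + (1 - y)(1 - y⁷) = 0`, which is the
claimed equation written in `y = x M`.
-/

section

variable (r : ℕ)

def pathCount : ℕ → ℕ → ℕ → ℕ
  | 0, s, t => if s = t then 1 else 0
  | n + 1, s, t =>
    ∑ z ∈ range (2 * r + 1), if r ≤ s + z then pathCount n (s + z - r) t else 0

theorem pathCount_zero (s t : ℕ) : pathCount r 0 s t = if s = t then 1 else 0 := rfl

theorem pathCount_succ (n s t : ℕ) : pathCount r (n + 1) s t =
    ∑ z ∈ range (2 * r + 1), if r ≤ s + z then pathCount r n (s + z - r) t else 0 := rfl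

theorem pathCount_succ_right (n s t : ℕ) : pathCount r (n + 1) s t =
    ∑ z ∈ range (2 * r + 1), if r ≤ t + z then pathCount r n s (t + z - r) else 0 := by
  induction n generalizing s t with
  | zero =>
    simp only [pathCount_succ, pathCount_zero]
    rw [← sum_range_reflect]
    refine sum_congr rfl fun z hz => ?_
    have := mem_range.mp hz
    split_ifs <;> omega
  | succ n ih =>
    rw [pathCount_succ]
    simp_rw [ih _ t, pathCount_succ r n s, ← sum_filter]
    exact sum_comm

theorem pathCount_comm (n s t : ℕ) : pathCount r n s t = pathCount r n t s := by
  induction n generalizing s t with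
  | zero => simp only [pathCount_zero, eq_comm]
  | succ n ih =>
    rw [pathCount_succ, pathCount_succ_right]
    simp only [ih]

/-- The condition of `motzkinCount`, with integer endpoints so that it recurses along
`Fin.cons`. -/
def IsMotzkinPath {n : ℕ} (s t : ℤ) (f : Fin n → Fin (2 * r + 1)) : Prop :=
  (∀ k : Fin (n + 1), 0 ≤ s + ∑ i : Fin n, if (i : ℕ) < (k : ℕ) then ((f i : ℤ) - r) else 0) ∧
    s + ∑ i : Fin n, ((f i : ℤ) - r) = t

instance {n : ℕ} (s t : ℤ) (f : Fin n → Fin (2 * r + 1)) :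
    Decidable (IsMotzkinPath r s t f) := by
  unfold IsMotzkinPath; infer_instance

theorem motzkinCount_one_eq_sum (s t n : ℕ) :
    motzkinCount r (fun _ => 1) 1 (fun _ => 1) s t n =
      ∑ f : Fin n → Fin (2 * r + 1), if IsMotzkinPath r s t f then 1 else 0 := by
  simp [motzkinCount, stepWeight, IsMotzkinPath]

theorem IsMotzkinPath.nonneg {n : ℕ} {s t : ℤ} {f : Fin n → Fin (2 * r + 1)}
    (h : IsMotzkinPath r s t f) : 0 ≤ s := by
  simpa using h.1 0

theorem isMotzkinPath_zero (s t : ℤ) (f : Fin 0 → Fin (2 * r + 1)) :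
    IsMotzkinPath r s t f ↔ 0 ≤ s ∧ s = t := by
  simp [IsMotzkinPath]

theorem isMotzkinPath_cons {n : ℕ} (s t : ℤ) (z : Fin (2 * r + 1)) (g : Fin n → Fin (2 * r + 1)) :
    IsMotzkinPath r s t (Fin.cons z g) ↔ 0 ≤ s ∧ IsMotzkinPath r (s + (z - r)) t g := by
  simp [IsMotzkinPath, Fin.forall_fin_succ, Fin.sum_univ_succ, add_assoc, and_assoc,
    -sum_sub_distrib]

theorem sum_isMotzkinPath_eq_pathCount (n s t : ℕ) :
    (∑ f : Fin n → Fin (2 * r + 1), if IsMotzkinPath r s t f then 1 else 0) =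
      pathCount r n s t := by
  induction n generalizing s with
  | zero => simp [isMotzkinPath_zero, pathCount_zero]
  | succ n ih =>
    rw [← (Fin.consEquiv fun _ => Fin (2 * r + 1)).sum_comp, Fintype.sum_prod_type,
      pathCount_succ, Finset.sum_range]
    refine sum_congr rfl fun z _ => ?_
    simp only [Fin.consEquiv, Equiv.coe_fn_mk, isMotzkinPath_cons, Nat.cast_nonneg, true_and]
    split_ifs with hz
    · rw [← ih, show (s : ℤ) + (z - r) = ((s + z - r : ℕ) : ℤ) by omega]
    · exact sum_eq_zero fun g _ => if_neg fun hg => by have := hg.nonneg; omega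

noncomputable def pathGF (s t : ℕ) : PowerSeries ℚ :=
  mk fun n => (pathCount r n s t : ℚ)

theorem motzkinGF_one_eq_pathGF (s t : ℕ) :
    motzkinGF r (fun _ => 1) 1 (fun _ => 1) s t = pathGF r s t := by
  ext n
  simp only [motzkinGF, pathGF, coeff_mk, motzkinCount_one_eq_sum,
    sum_isMotzkinPath_eq_pathCount]

theorem pathGF_comm (s t : ℕ) : pathGF r s t = pathGF r t s := by
  ext n
  simp only [pathGF, coeff_mk, pathCount_comm r n s t]

theorem isUnit_pathGF_self (s : ℕ) : IsUnit (pathGF r s s) :=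
  isUnit_iff_constantCoeff.mpr (by simp [pathGF, pathCount_zero])

theorem pathCount_succ_zero_zero (n : ℕ) :
    pathCount r (n + 1) 0 0 = ∑ i ∈ range (r + 1), pathCount r n i 0 := by
  rw [pathCount_succ, two_mul, add_assoc, sum_range_add,
    sum_eq_zero fun z hz => if_neg (by rw [mem_range] at hz; omega)]
  simp

theorem pathGF_zero_zero : pathGF r 0 0 = 1 + X * ∑ i ∈ range (r + 1), pathGF r i 0 := by
  ext n
  cases n with
  | zero => simp [pathGF, pathCount_zero]
  | succ n => simp [pathGF, coeff_succ_X_mul, map_sum, pathCount_succ_zero_zero]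

theorem sum_pathCount_zero (b m : ℕ) :
    ∑ i ∈ range m, pathCount r 0 b i = if b < m then 1 else 0 := by
  simp [pathCount_zero]

theorem sum_pathCount_succ (k b m : ℕ) :
    ∑ i ∈ range m, pathCount r (k + 1) b i =
      ∑ z ∈ range (2 * r + 1),
        if r ≤ b + z then ∑ i ∈ range m, pathCount r k (b + z - r) i else 0 := by
  simp_rw [pathCount_succ, ← sum_filter]
  exact sum_comm

theorem sum_range_landing_below (g : ℕ → ℕ) (h b : ℕ) :
    (∑ z ∈ range (2 * r + 1), if b + z < r ∧ r ≤ h + b + z then g (h + b + z - r) else 0) =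
      ∑ j ∈ range h, if b < j + r + 1 - h then g j else 0 := by
  rw [← sum_filter, ← sum_filter]
  refine sum_nbij' (fun z => h + b + z - r) (fun j => j + r - h - b) ?_ ?_ ?_ ?_
    fun _ _ => rfl <;>
    intro x hx <;> simp only [mem_filter, mem_range] at hx ⊢ <;> omega

/-- Split a path from `h + b` at its first step below level `h`: the first `k` steps form a
path from `b` to some `i` lifted by `h`, the next step goes from `h + i` down to `j < h` (possible
iff `i < j + r + 1 - h`), and the rest is a path from `j` to `0`. -/
theorem pathCount_add_first_passage {h : ℕ} (hh : 1 ≤ h) (n b : ℕ) :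
    pathCount r n (h + b) 0 = ∑ k ∈ range n, ∑ j ∈ range h,
      (∑ i ∈ range (j + r + 1 - h), pathCount r k b i) * pathCount r (n - 1 - k) j 0 := by
  induction n generalizing b with
  | zero => rw [pathCount_zero, if_neg (by omega), sum_range_zero]
  | succ n ih =>
    have split : pathCount r (n + 1) (h + b) 0 =
        (∑ z ∈ range (2 * r + 1), if r ≤ b + z then pathCount r n (h + (b + z - r)) 0 else 0) +
          ∑ z ∈ range (2 * r + 1),
            if b + z < r ∧ r ≤ h + b + z then pathCount r n (h + b + z - r) 0 else 0 := by
      rw [pathCount_succ, ← sum_add_distrib]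
      refine sum_congr rfl fun z _ => ?_
      by_cases hz : r ≤ b + z
      · rw [if_pos (by omega), if_pos hz, if_neg (by omega), add_zero]
        congr 1; omega
      · rw [if_neg hz, zero_add]
        exact if_congr (by omega) rfl rfl
    rw [split, sum_range_landing_below r (fun j => pathCount r n j 0), sum_range_succ' _ n]
    congr 1
    · have shift (k : ℕ) : n + 1 - 1 - (k + 1) = n - 1 - k := by omega
      simp_rw [ih, sum_pathCount_succ, shift, ← sum_filter, sum_mul]
      rw [sum_comm]
      exact sum_congr rfl fun k _ => sum_comm
    · simp only [sum_pathCount_zero, boole_mul, Nat.add_sub_cancel, Nat.sub_zero]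

theorem pathGF_add_first_passage {h : ℕ} (hh : 1 ≤ h) (b : ℕ) :
    pathGF r (h + b) 0 =
      X * ∑ j ∈ range h, (∑ i ∈ range (j + r + 1 - h), pathGF r b i) * pathGF r j 0 := by
  ext n
  cases n with
  | zero => simp [pathGF, pathCount_zero]; omega
  | succ n =>
    rw [coeff_succ_X_mul, pathGF, coeff_mk, pathCount_add_first_passage r hh]
    simp only [map_sum, coeff_mul, Nat.sum_antidiagonal_eq_sum_range_succ_mk, pathGF, coeff_mk,
      Nat.add_sub_cancel]
    push_cast
    exact sum_comm

theorem pathGF_first_passage {h : ℕ} (hh : 1 ≤ h) :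
    pathGF r h 0 =
      X * ∑ j ∈ range h, (∑ i ∈ range (j + r + 1 - h), pathGF r i 0) * pathGF r j 0 := by
  simpa only [pathGF_comm r 0, add_zero] using pathGF_add_first_passage r hh 0

end

theorem pathGF_rank_three_system :
    pathGF 3 0 0 = 1 + X * (pathGF 3 0 0 + pathGF 3 1 0 + pathGF 3 2 0 + pathGF 3 3 0) ∧
    pathGF 3 1 0 = X * (pathGF 3 0 0 + pathGF 3 1 0 + pathGF 3 2 0) * pathGF 3 0 0 ∧
    pathGF 3 2 0 = X * (pathGF 3 0 0 + pathGF 3 1 0) * pathGF 3 0 0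
      + X * (pathGF 3 0 0 + pathGF 3 1 0 + pathGF 3 2 0) * pathGF 3 1 0 ∧
    pathGF 3 3 0 = X * pathGF 3 0 0 * pathGF 3 0 0
      + X * (pathGF 3 0 0 + pathGF 3 1 0) * pathGF 3 1 0
      + X * (pathGF 3 0 0 + pathGF 3 1 0 + pathGF 3 2 0) * pathGF 3 2 0 := by
  refine ⟨?_, ?_, ?_, ?_⟩
  · simpa [sum_range_succ, add_assoc] using pathGF_zero_zero 3
  · exact (pathGF_first_passage 3 (h := 1) le_rfl).trans (by simp [sum_range_succ]; ring)
  · exact (pathGF_first_passage 3 (h := 2) (by norm_num)).trans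
      (by simp [sum_range_succ]; ring)
  · exact (pathGF_first_passage 3 (h := 3) (by norm_num)).trans
      (by simp [sum_range_succ]; ring)

/-- The cofactor is the exact quotient, in `ℤ[y][b]`, of the left-hand side with `M` substituted by
the kernel polynomial. -/
theorem rank_three_quadratic_of_kernel {R : Type*} [CommRing R] {y b M : R}
    (hb : y * (1 + b + b ^ 2) + y ^ 2 * (1 + b) = b)
    (hM : M = 1 + y * (1 + b + b ^ 2 + b ^ 3) + y ^ 2 * (2 + 3 * b + 2 * b ^ 2)) :
    y ^ 2 * M ^ 2 - (1 - 2 * y + 2 * y ^ 3 - 2 * y ^ 5 + y ^ 6) * M + (1 - y) * (1 - y ^ 7) =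
      0 := by
  subst hM
  linear_combination (y + y * b + y * b ^ 2 + 3 * y ^ 2 + 3 * y ^ 2 * b + y ^ 2 * b ^ 3
    + 2 * y ^ 3 * b + 3 * y ^ 3 * b ^ 2 + y ^ 3 * b ^ 3 + y ^ 3 * b ^ 4 + 2 * y ^ 4 + 3 * y ^ 4 * b
    + 5 * y ^ 4 * b ^ 2 + 3 * y ^ 4 * b ^ 3 + 3 * y ^ 5 + 5 * y ^ 5 * b + y ^ 5 * b ^ 2 - y ^ 6
    - 2 * y ^ 6 * b) * hb

theorem rank_three_relation_of_system {R : Type*} [CommRing R] {x M a₁ a₂ a₃ : R} (hM : IsUnit M)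
    (h₀ : M = 1 + x * (M + a₁ + a₂ + a₃))
    (h₁ : a₁ = x * (M + a₁ + a₂) * M)
    (h₂ : a₂ = x * (M + a₁) * M + x * (M + a₁ + a₂) * a₁)
    (h₃ : a₃ = x * M * M + x * (M + a₁) * a₁ + x * (M + a₁ + a₂) * a₂) :
    1 - (1 + x) * M + 2 * x * M ^ 2 + x ^ 2 * (1 - 2 * x) * M ^ 4 + 2 * x ^ 5 * M ^ 6
      - x ^ 6 * (1 + x) * M ^ 7 + x ^ 8 * M ^ 8 = 0 := by
  obtain ⟨u, rfl⟩ := hM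
  obtain ⟨b, rfl⟩ : ∃ b, a₁ = b * u := ⟨a₁ * ↑u⁻¹, by simp⟩
  obtain ⟨c, rfl⟩ : ∃ c, a₂ = c * u := ⟨a₂ * ↑u⁻¹, by simp⟩
  obtain ⟨d, rfl⟩ : ∃ d, a₃ = d * u := ⟨a₃ * ↑u⁻¹, by simp⟩
  set y := x * u
  have hb : b = y * (1 + b + c) := u.isUnit.mul_right_cancel (by linear_combination h₁)
  have hc : c = y * (1 + b) + b ^ 2 :=
    u.isUnit.mul_right_cancel (by linear_combination h₂ - b * u * hb)
  have hd : d = y + y * b * (1 + b) + c * b :=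
    u.isUnit.mul_right_cancel (by linear_combination h₃ - c * u * hb)
  have hu : (u : R) = 1 + y * (1 + b + c + d) := by linear_combination h₀
  have kernel : y * (1 + b + b ^ 2) + y ^ 2 * (1 + b) = b := by linear_combination -hb - y * hc
  have param : (u : R) = 1 + y * (1 + b + b ^ 2 + b ^ 3) + y ^ 2 * (2 + 3 * b + 2 * b ^ 2) := by
    linear_combination hu + (y + y * b) * hc + y * hd
  linear_combination rank_three_quadratic_of_kernel kernel param

/-- the generating function `M` of the non-colored Motzkin numbers of rank 3
satisfies `0 = 1 − (1+x)M + 2xM² + x²(1−2x)M⁴ + 2x⁵M⁶ − x⁶(1+x)M⁷ + x⁸M⁸`. -/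
theorem motzkin_rank_three_uncolored_gf (M : PowerSeries ℚ)
    (hM : M = motzkinGF 3 (fun _ => 1) 1 (fun _ => 1) 0 0) :
    (0 : PowerSeries ℚ) =
      1 - (1 + X) * M + 2 * X * M ^ 2 + X ^ 2 * (1 - 2 * X) * M ^ 4 + 2 * X ^ 5 * M ^ 6
        - X ^ 6 * (1 + X) * M ^ 7 + X ^ 8 * M ^ 8 := by
  rw [hM, motzkinGF_one_eq_pathGF]
  obtain ⟨h₀, h₁, h₂, h₃⟩ := pathGF_rank_three_system
  exact (rank_three_relation_of_system (isUnit_pathGF_self 3 0) h₀ h₁ h₂ h₃).symm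
end

section
/- For rank r = 3 with all weights equal to 1, the generating functions B_{i,j}(x) ∈ ℚ⟦x⟧ satisfy the system: B_{0,0} = 1 + xB_{0,0} + x²B_{0,0}(B_{0,0} + 2B_{1,0} + 2B_{2,0} + 2B_{2,1} + B_{1,1} + B_{2,2}); B_{1,0} = xB_{0,0}(B_{0,0} + B_{1,0} + B_{2,0}); B_{2,0} = xB_{0,0}(B_{1,0} + B_{1,1} + B_{2,1}); B_{1,1} = B_{0,0} + xB_{1,0}(B_{0,0} + B_{1,0} + B_{2,0}); B_{2,1} = B_{1,0} + xB_{1,0}(B_{1,0} + B_{1,1} + B_{2,1}); and B_{2,2} = B_{1,1} + xB_{2,0}(B_{1,0} + B_{1,1} + B_{2,1}). -/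
open PowerSeries Finset

/-!
Write `δ_{s,t}` for the Kronecker delta and `N(s) = {h ≥ 0 : |h - s| ≤ r}`. Removing the first
step of a path gives `B_{s,t} = δ_{s,t} + x Σ_{h ∈ N(s)} B_{h,t}`, and two families of power
series solving the same system `F_s = a_s + x Σ_{h ∈ N(s)} F_h` agree, degree by degree. Checking
that suitable right-hand sides solve the system of the left-hand sides gives the last-step
equation, the symmetry `B_{s,t} = B_{t,s}` and the first-passage decomposition
`B_{s+1,t} = B_{s,t-1} + x (B_{s,0} + ⋯ + B_{s,r-1}) B_{0,t}` (with `B_{s,-1} = 0`): a path from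
`s + 1` either stays at height `≥ 1`, or first reaches `0` by a down-step from one of the heights
`1, …, r`. For `r = 3` the six equations are linear combinations of these identities.
-/

namespace PowerSeries

theorem eq_of_eq_add_X_mul_sum {R ι : Type*} [Semiring R] {N : ι → Finset ι}
    {a F G : ι → R⟦X⟧} (hF : ∀ i, F i = a i + X * ∑ j ∈ N i, F j)
    (hG : ∀ i, G i = a i + X * ∑ j ∈ N i, G j) : F = G := by
  funext i
  ext n
  induction n generalizing i with
  | zero => rw [hF, hG]; simp
  | succ n ih => rw [hF, hG]; simp [coeff_succ_X_mul, ih]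

end PowerSeries

-- Truncated subtraction makes this exactly `{h ≥ 0 : |h - s| ≤ r}`.
def nextHeights (r s : ℕ) : Finset ℕ := Icc (s - r) (s + r)

theorem mem_nextHeights_comm {r s h : ℕ} : h ∈ nextHeights r s ↔ s ∈ nextHeights r h := by
  simp only [nextHeights, mem_Icc]; omega

theorem sum_nextHeights_succ {M : Type*} [AddCommMonoid M] (r s : ℕ) (f : ℕ → M) :
    ∑ h ∈ nextHeights r (s + 1), f h
      = ∑ h ∈ nextHeights r s, f (h + 1) + if s < r then f 0 else 0 := by
  unfold nextHeights
  have hshift :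
      ∑ h ∈ Icc (s - r) (s + r), f (h + 1) = ∑ h ∈ Icc (s - r + 1) (s + r + 1), f h := by
    rw [← map_add_right_Icc, sum_map]; rfl
  rw [hshift]
  split_ifs with hsr
  · rw [Nat.sub_eq_zero_of_le hsr.le, zero_add, Nat.sub_eq_zero_of_le hsr,
      ← sum_Ioc_add_eq_sum_Icc (Nat.zero_le _), ← Icc_add_one_left_eq_Ioc, zero_add,
      add_right_comm]
  · rw [add_zero, add_right_comm, Nat.sub_add_comm (by omega)]

theorem sum_fin_eq_sum_nextHeights {M : Type*} [AddCommMonoid M] (r s : ℕ) (f : ℕ → M) :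
    ∑ a : Fin (2 * r + 1), (if r ≤ s + a then f (s + a - r) else 0)
      = ∑ h ∈ nextHeights r s, f h := by
  rw [Fin.sum_univ_eq_sum_range (fun a => if r ≤ s + a then f (s + a - r) else 0), ← sum_filter]
  refine sum_nbij' (fun a => s + a - r) (fun h => h + r - s) ?_ ?_ ?_ ?_ ?_ <;>
    intro x hx <;> simp_all [nextHeights] <;> omega

theorem motzkinCount_zero (r : ℕ) (u : ℕ → ℕ) (l : ℕ) (d : ℕ → ℕ) (s t : ℕ) :
    motzkinCount r u l d s t 0 = if s = t then 1 else 0 := by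
  simp [motzkinCount]

theorem motzkinCount_succ (r : ℕ) (u : ℕ → ℕ) (l : ℕ) (d : ℕ → ℕ) (s t n : ℕ) :
    motzkinCount r u l d s t (n + 1) = ∑ a : Fin (2 * r + 1),
      if r ≤ s + a then stepWeight u l d ((a : ℤ) - r) * motzkinCount r u l d (s + a - r) t n
      else 0 := by
  unfold motzkinCount
  rw [← (Fin.consEquiv fun _ : Fin (n + 1) => Fin (2 * r + 1)).sum_comp, Fintype.sum_prod_type]
  refine sum_congr rfl fun a _ => ?_
  simp only [Fin.consEquiv_apply, Fin.prod_univ_succ, Fin.cons_zero, Fin.cons_succ]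
  have hprefix : ∀ (g : Fin n → Fin (2 * r + 1)) (k : ℕ),
      (∑ i : Fin (n + 1), if (i : ℕ) < k + 1
          then ((Fin.cons (α := fun _ => Fin (2 * r + 1)) a g i : Fin _) : ℤ) - r else 0)
        = ((a : ℤ) - r) + ∑ i : Fin n, if (i : ℕ) < k then (g i : ℤ) - r else 0 := by
    intro g k
    simp [Fin.sum_univ_succ]
  have htotal : ∀ g : Fin n → Fin (2 * r + 1),
      (∑ i : Fin (n + 1), (((Fin.cons (α := fun _ => Fin (2 * r + 1)) a g i : Fin _) : ℤ) - r))
        = ((a : ℤ) - r) + ∑ i : Fin n, ((g i : ℤ) - r) := by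
    intro g
    rw [Fin.sum_univ_succ]
    simp only [Fin.cons_zero, Fin.cons_succ]
  split_ifs with har
  · rw [mul_sum]
    refine sum_congr rfl fun g _ => ?_
    rw [mul_ite, mul_zero]
    refine if_congr ?_ rfl rfl
    rw [Fin.forall_fin_succ, htotal]
    simp only [Fin.val_succ, hprefix, Fin.val_zero, Nat.not_lt_zero, if_false, sum_const_zero]
    push_cast [har]
    constructor
    · rintro ⟨⟨-, hk⟩, ht⟩
      exact ⟨fun k => by linarith [hk k], by linarith⟩
    · rintro ⟨hk, ht⟩
      exact ⟨⟨by positivity, fun k => by linarith [hk k]⟩, by linarith⟩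
  · refine sum_eq_zero fun g _ => if_neg fun ⟨hk, _⟩ => har ?_
    have hfirst := hk (Fin.succ 0)
    rw [Fin.val_succ, hprefix] at hfirst
    simp only [Fin.val_zero, Nat.not_lt_zero, if_false, sum_const_zero] at hfirst
    omega

def IsFirstStepSolution {R : Type*} [Semiring R] (r : ℕ) (B : ℕ → ℕ → R⟦X⟧) : Prop :=
  ∀ s t, B s t = (if s = t then 1 else 0) + X * ∑ h ∈ nextHeights r s, B h t

namespace IsFirstStepSolution

variable {R : Type*} {r : ℕ} {B : ℕ → ℕ → R⟦X⟧}

theorem last_step [Semiring R] (hB : IsFirstStepSolution r B) (s t : ℕ) :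
    B s t = (if s = t then 1 else 0) + X * ∑ k ∈ nextHeights r t, B s k := by
  refine congrFun (eq_of_eq_add_X_mul_sum (N := nextHeights r)
    (G := fun s => (if s = t then 1 else 0) + X * ∑ k ∈ nextHeights r t, B s k)
    (fun s => hB s t) fun s => ?_) s
  conv_lhs => rw [sum_congr rfl fun k _ => hB s k]
  simp only [sum_add_distrib, ← mul_sum, sum_ite_eq, sum_ite_eq', mul_add]
  rw [sum_comm]
  simp only [mem_nextHeights_comm (h := s)]

theorem symm [Semiring R] (hB : IsFirstStepSolution r B) (s t : ℕ) : B s t = B t s := by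
  refine congrFun (eq_of_eq_add_X_mul_sum (N := nextHeights r) (G := fun s => B t s)
    (fun s => hB s t) fun s => ?_) s
  simp only [hB.last_step t s, eq_comm]

theorem first_passage [CommSemiring R] (hB : IsFirstStepSolution r B) (s t : ℕ) :
    B (s + 1) t = (if t = 0 then 0 else B s (t - 1)) + X * (∑ i ∈ range r, B s i) * B 0 t := by
  have hlower : ∀ s, (if t = 0 then 0 else B s (t - 1))
      = (if s + 1 = t then 1 else 0)
        + X * ∑ h ∈ nextHeights r s, if t = 0 then 0 else B h (t - 1) := by
    intro s
    cases t with
    | zero => simp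
    | succ t => simpa using hB s t
  have hrow : ∀ s, ∑ i ∈ range r, B s i
      = (if s < r then 1 else 0) + X * ∑ h ∈ nextHeights r s, ∑ i ∈ range r, B h i := by
    intro s
    rw [sum_congr rfl fun i _ => hB s i, sum_add_distrib, ← mul_sum, sum_comm, sum_ite_eq]
    simp only [mem_range]
  refine congrFun (eq_of_eq_add_X_mul_sum (N := nextHeights r)
    (a := fun s => (if s + 1 = t then 1 else 0) + X * (if s < r then B 0 t else 0))
    (F := fun s => B (s + 1) t)
    (G := fun s => (if t = 0 then 0 else B s (t - 1)) + X * (∑ i ∈ range r, B s i) * B 0 t)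
    (fun s => ?_) fun s => ?_) s
  · rw [hB, sum_nextHeights_succ]
    ring
  · rw [hlower s, hrow s, sum_add_distrib, ← sum_mul, ← mul_sum]
    split_ifs <;> ring

end IsFirstStepSolution

theorem isFirstStepSolution_motzkinGF (r : ℕ) :
    IsFirstStepSolution r (motzkinGF r (fun _ => 1) 1 (fun _ => 1)) := by
  intro s t
  ext n
  cases n with
  | zero => simp [motzkinGF, motzkinCount_zero]
  | succ n =>
    rw [map_add, coeff_succ_X_mul, map_sum, ← sum_fin_eq_sum_nextHeights]
    simp [motzkinGF, motzkinCount_succ, stepWeight, apply_ite (coeff (n + 1))]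

/-- the rank-3 (all weights 1) system of equations for the generating
functions `B_{i,j}`. -/
theorem motzkin_rank_three_system (B : ℕ → ℕ → PowerSeries ℚ)
    (hB : ∀ s t, B s t = motzkinGF 3 (fun _ => 1) 1 (fun _ => 1) s t) :
    B 0 0 = 1 + X * B 0 0
        + X ^ 2 * B 0 0 * (B 0 0 + 2 * B 1 0 + 2 * B 2 0 + 2 * B 2 1 + B 1 1 + B 2 2) ∧
      B 1 0 = X * B 0 0 * (B 0 0 + B 1 0 + B 2 0) ∧
      B 2 0 = X * B 0 0 * (B 1 0 + B 1 1 + B 2 1) ∧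
      B 1 1 = B 0 0 + X * B 1 0 * (B 0 0 + B 1 0 + B 2 0) ∧
      B 2 1 = B 1 0 + X * B 1 0 * (B 1 0 + B 1 1 + B 2 1) ∧
      B 2 2 = B 1 1 + X * B 2 0 * (B 1 0 + B 1 1 + B 2 1) := by
  have hsol : IsFirstStepSolution 3 B := by
    rw [show B = _ from funext₂ hB]
    exact isFirstStepSolution_motzkinGF 3
  have h00 := hsol 0 0
  rw [show nextHeights 3 0 = range 4 by decide] at h00
  have h10 := hsol.first_passage 0 0
  have h20 := hsol.first_passage 1 0
  have h30 := hsol.first_passage 2 0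
  have h11 := hsol.first_passage 0 1
  have h21 := hsol.first_passage 1 1
  have h22 := hsol.first_passage 1 2
  simp only [↓reduceIte, sum_range_succ, range_one, sum_singleton, zero_add, Nat.reduceAdd,
    one_ne_zero, OfNat.ofNat_ne_zero, tsub_self, Nat.add_one_sub_one, hsol.symm 0 1,
    hsol.symm 0 2, hsol.symm 1 2] at h00 h10 h20 h30 h11 h21 h22
  refine ⟨?_, ?_, ?_, ?_, ?_, ?_⟩
  · linear_combination h00 + X * (h10 + h20 + h30)
  · linear_combination h10
  · linear_combination h20
  · linear_combination h11
  · linear_combination h21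
  · linear_combination h22
end
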